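/- arXiv:2304.04805 — 3 statements merged into one kernel-verified Lean document; each statement's English description precedes it below -/
import Mathlib

section
/- (Brun–Hooley sieve, upper bound.) Let 𝒜 be a finite set of positive integers and 𝒫 a finite set of primes, and set P = Π_{p ∈ 𝒫} p and S(𝒜,𝒫) = #{a ∈ 𝒜 : gcd(a,P) = 1}. Suppose that for every d | P one has A_d := #{a ∈ 𝒜 : d | a} = X·g(d) + r_d, where X > 0 and g is a multiplicative function with 0 < g(p) < 1 for p ∈ 𝒫 and g(p) = 0 for p ∉ 𝒫. Let 𝒫 = 𝒫₁ ∪ ⋯ ∪ 𝒫_t be a partition of 𝒫 into disjoint subsets, let P_j = Π_{p ∈ 𝒫_j} p, let k₁,…,k_t be even positive integers, let V_j = Π_{p ∈ 𝒫_j}(1 − g(p)), L_j = log(V_j^{-1}), E = Σ_{j=1}^{t} e^{L_j} L_j^{k_j+1}/(k_j+1)!, and R = Σ |r_{d₁⋯d_t}|, where the sum runs over tuples (d₁,…,d_t) with d_j | P_j and ω(d_j) ≤ k_j for all j. Then S(𝒜,𝒫) ≤ X·Π_{p ∈ 𝒫}(1 − g(p))·e^E + R. -/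
/-!
For even `k`, the Bonferroni inequalities bound `∏_{p ∈ S} (1 - x p)`, for `0 ≤ x ≤ 1`, between
its inclusion–exclusion expansion truncated at subsets of size `≤ k` and that truncation minus
the elementary symmetric sum `e_{k+1}(x)`. With `x p = [p ∣ a]` this makes the product over the
blocks `P_j` of the truncated Möbius sums a majorant of `[gcd(a, P) = 1]`. Summing over `a ∈ A`
and inserting `A_d = X g(d) + r_d`, the remainders contribute at most `R`, while by
multiplicativity the main term factors over the blocks into truncated expansions of `V_j`, each at
most `V_j + e_{k_j+1}(g) ≤ V_j + L_j^{k_j+1}/(k_j+1)! = V_j (1 + e^{L_j} L_j^{k_j+1}/(k_j+1)!)`,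
using `e_m ≤ (∑ g)^m / m!` and `∑_{p ∈ P_j} g p ≤ L_j`; finally `1 + y ≤ e^y`.
-/

open Finset
open scoped Nat

namespace Finset

variable {α R : Type*}

section CommRing

variable [CommRing R]

def bonferroniSum (S : Finset α) (x : α → R) (k : ℕ) : R :=
  ∑ T ∈ S.powerset with #T ≤ k, (-1) ^ #T * ∏ p ∈ T, x p

theorem bonferroniSum_zero (S : Finset α) (x : α → R) : bonferroniSum S x 0 = 1 := by
  classical
  simp [bonferroniSum, sum_filter, card_eq_zero]

theorem bonferroniSum_empty (x : α → R) (k : ℕ) : bonferroniSum ∅ x k = 1 := by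
  simp [bonferroniSum, sum_filter]

theorem bonferroniSum_insert_succ [DecidableEq α] {a : α} {S : Finset α} (ha : a ∉ S)
    (x : α → R) (k : ℕ) :
    bonferroniSum (insert a S) x (k + 1) =
      bonferroniSum S x (k + 1) - x a * bonferroniSum S x k := by
  simp only [bonferroniSum, sum_filter, sum_powerset_insert ha, mul_sum, ← sum_neg_distrib,
    sub_eq_add_neg]
  congr 1
  refine sum_congr rfl fun T hT => ?_
  have haT : a ∉ T := fun h => ha (mem_powerset.mp hT h)
  rw [card_insert_of_notMem haT, prod_insert haT, pow_succ]
  split_ifs <;> first | omega | ring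

theorem sum_powersetCard_succ_insert_prod [DecidableEq α] {a : α} {S : Finset α} (ha : a ∉ S)
    (x : α → R) (m : ℕ) :
    ∑ T ∈ (insert a S).powersetCard (m + 1), ∏ p ∈ T, x p =
      ∑ T ∈ S.powersetCard (m + 1), ∏ p ∈ T, x p +
        x a * ∑ T ∈ S.powersetCard m, ∏ p ∈ T, x p := by
  have hdisj : Disjoint (S.powersetCard (m + 1)) ((S.powersetCard m).image (insert a)) := by
    refine disjoint_left.mpr fun T hT hT' => ?_
    obtain ⟨U, -, rfl⟩ := mem_image.mp hT'
    exact ha ((mem_powersetCard.mp hT).1 (mem_insert_self a U))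
  have hinj : Set.InjOn (insert a) (S.powersetCard m : Set (Finset α)) := fun U hU V hV h => by
    have hU' : a ∉ U := fun h' => ha ((mem_powersetCard.mp hU).1 h')
    have hV' : a ∉ V := fun h' => ha ((mem_powersetCard.mp hV).1 h')
    rw [← erase_insert hU', ← erase_insert hV', h]
  rw [powersetCard_succ_insert ha, sum_union hdisj, sum_image hinj, mul_sum]
  congr 1
  refine sum_congr rfl fun U hU => prod_insert fun h => ha ((mem_powersetCard.mp hU).1 h)

end CommRing

section LinearOrderedRing

variable [CommRing R] [LinearOrder R] [IsStrictOrderedRing R] [DecidableEq α] {S : Finset α}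
  {x : α → R}

theorem bonferroniSum_sub_prod_one_sub_mem_Icc (hx : ∀ p ∈ S, 0 ≤ x p ∧ x p ≤ 1) (k : ℕ) :
    (-1) ^ k * (bonferroniSum S x k - ∏ p ∈ S, (1 - x p)) ∈
      Set.Icc 0 (∑ T ∈ S.powersetCard (k + 1), ∏ p ∈ T, x p) := by
  induction S using Finset.induction_on generalizing k with
  | empty =>
    simp [bonferroniSum_empty,
      (powersetCard_eq_empty (s := (∅ : Finset α)) (n := k + 1)).mpr k.succ_pos]
  | @insert a S ha ih =>
    have hxa := hx a (mem_insert_self a S)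
    have ih := fun k => ih (fun p hp => hx p (mem_insert_of_mem hp)) k
    rw [prod_insert ha, sum_powersetCard_succ_insert_prod ha]
    cases k with
    | zero =>
      have h0 := ih 0
      have hprod : 0 ≤ ∏ p ∈ S, (1 - x p) :=
        prod_nonneg fun p hp => sub_nonneg.mpr (hx p (mem_insert_of_mem hp)).2
      simp only [bonferroniSum_zero, pow_zero, one_mul, powersetCard_zero, sum_singleton,
        prod_empty, Set.mem_Icc] at h0 ⊢
      constructor <;> nlinarith
    | succ k =>
      have h1 := ih (k + 1)
      have h0 := ih k
      rw [bonferroniSum_insert_succ ha]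
      have hrec : (-1) ^ (k + 1) * (bonferroniSum S x (k + 1) - x a * bonferroniSum S x k -
            (1 - x a) * ∏ p ∈ S, (1 - x p)) =
          (-1) ^ (k + 1) * (bonferroniSum S x (k + 1) - ∏ p ∈ S, (1 - x p)) +
            x a * ((-1) ^ k * (bonferroniSum S x k - ∏ p ∈ S, (1 - x p))) := by
        ring
      rw [hrec]
      exact ⟨add_nonneg h1.1 (mul_nonneg hxa.1 h0.1),
        add_le_add h1.2 (mul_le_mul_of_nonneg_left h0.2 hxa.1)⟩

theorem prod_one_sub_le_bonferroniSum (hx : ∀ p ∈ S, 0 ≤ x p ∧ x p ≤ 1) {k : ℕ}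
    (hk : Even k) :
    ∏ p ∈ S, (1 - x p) ≤ bonferroniSum S x k := by
  have := (bonferroniSum_sub_prod_one_sub_mem_Icc hx k).1
  rw [hk.neg_one_pow, one_mul] at this
  linarith

theorem bonferroniSum_le_prod_one_sub_add (hx : ∀ p ∈ S, 0 ≤ x p ∧ x p ≤ 1) {k : ℕ}
    (hk : Even k) :
    bonferroniSum S x k ≤ ∏ p ∈ S, (1 - x p) + ∑ T ∈ S.powersetCard (k + 1), ∏ p ∈ T, x p := by
  have := (bonferroniSum_sub_prod_one_sub_mem_Icc hx k).2
  rw [hk.neg_one_pow, one_mul] at this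
  linarith

theorem factorial_mul_sum_powersetCard_prod_le (hx : ∀ p ∈ S, 0 ≤ x p) (m : ℕ) :
    m ! * ∑ T ∈ S.powersetCard m, ∏ p ∈ T, x p ≤ (∑ p ∈ S, x p) ^ m := by
  induction S using Finset.induction_on generalizing m with
  | empty =>
    cases m with
    | zero => simp
    | succ m => simp [(powersetCard_eq_empty (s := (∅ : Finset α)) (n := m + 1)).mpr m.succ_pos]
  | @insert a S ha ih =>
    have hxa := hx a (mem_insert_self a S)
    have ih := fun m => ih (fun p hp => hx p (mem_insert_of_mem hp)) m
    cases m with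
    | zero => simp
    | succ m =>
      have hsum : 0 ≤ ∑ p ∈ S, x p := sum_nonneg fun p hp => hx p (mem_insert_of_mem hp)
      rw [sum_powersetCard_succ_insert_prod ha, sum_insert ha, add_comm (x a)]
      calc ((m + 1)! : R) * (∑ T ∈ S.powersetCard (m + 1), ∏ p ∈ T, x p +
              x a * ∑ T ∈ S.powersetCard m, ∏ p ∈ T, x p)
          = (m + 1)! * ∑ T ∈ S.powersetCard (m + 1), ∏ p ∈ T, x p +
              (m + 1) * x a * (m ! * ∑ T ∈ S.powersetCard m, ∏ p ∈ T, x p) := by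
            push_cast [Nat.factorial_succ]; ring
        _ ≤ (∑ p ∈ S, x p) ^ (m + 1) + (m + 1) * x a * (∑ p ∈ S, x p) ^ m := by
            gcongr
            · exact ih (m + 1)
            · exact ih m
        _ ≤ (∑ p ∈ S, x p + x a) ^ (m + 1) := by
            have := pow_add_mul_le_add_pow hsum (by linarith : 0 ≤ 2 * ∑ p ∈ S, x p + x a) (m + 1)
            push_cast at this
            simpa [mul_comm, mul_left_comm, mul_assoc] using this

end LinearOrderedRing

theorem prod_bonferroniSum {ι : Type*} [Fintype ι] [DecidableEq ι] [CommRing R]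
    (S : ι → Finset α) (x : α → R) (k : ι → ℕ) :
    ∏ j, bonferroniSum (S j) x (k j) =
      ∑ τ ∈ Fintype.piFinset fun j => {T ∈ (S j).powerset | #T ≤ k j},
        (∏ j, (-1) ^ #(τ j)) * ∏ j, ∏ p ∈ τ j, x p := by
  simp only [bonferroniSum, prod_univ_sum, prod_mul_distrib]

theorem prod_prod_eq_prod_biUnion {ι M : Type*} [Fintype ι] [DecidableEq α] [CommMonoid M]
    {S τ : ι → Finset α} (hdisj : ∀ i j, i ≠ j → Disjoint (S i) (S j)) (hτ : ∀ j, τ j ⊆ S j)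
    (y : α → M) :
    ∏ j, ∏ p ∈ τ j, y p = ∏ p ∈ univ.biUnion τ, y p :=
  (prod_biUnion fun i _ j _ hij => (hdisj i j hij).mono (hτ i) (hτ j)).symm

theorem prod_primes_dvd_iff {U : Finset ℕ} (hU : ∀ p ∈ U, p.Prime) (a : ℕ) :
    ∏ p ∈ U, p ∣ a ↔ ∀ p ∈ U, p ∣ a :=
  ⟨fun h _ hp => (dvd_prod_of_mem _ hp).trans h,
    prod_primes_dvd a fun p hp => (hU p hp).prime⟩

theorem map_prod_primes [CommMonoid R] {g : ℕ → R} (hg1 : g 1 = 1)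
    (hgmult : ∀ m n : ℕ, m.Coprime n → g (m * n) = g m * g n)
    {U : Finset ℕ} (hU : ∀ p ∈ U, p.Prime) :
    g (∏ p ∈ U, p) = ∏ p ∈ U, g p := by
  induction U using Finset.induction_on with
  | empty => simpa using hg1
  | @insert p U hpU ih =>
    have hp := hU p (mem_insert_self p U)
    have hU' := fun q hq => hU q (mem_insert_of_mem hq)
    have hcop : p.Coprime (∏ q ∈ U, q) := Nat.Coprime.prod_right fun q hq =>
      (Nat.coprime_primes hp (hU' q hq)).mpr fun h => hpU (h ▸ hq)
    rw [prod_insert hpU, prod_insert hpU, hgmult p _ hcop, ih hU']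

theorem image_prod_filter_powerset {S : Finset ℕ} (hS : ∀ p ∈ S, p.Prime) (k : ℕ) :
    {T ∈ S.powerset | #T ≤ k}.image (fun T => ∏ p ∈ T, p) =
      {m ∈ (∏ p ∈ S, p).divisors | #m.primeFactors ≤ k} := by
  have hS0 : ∏ p ∈ S, p ≠ 0 := prod_ne_zero_iff.mpr fun p hp => (hS p hp).ne_zero
  have hsqf : Squarefree (∏ p ∈ S, p) := by
    refine squarefree_prod_of_pairwise_isCoprime (fun p hp q hq hpq => ?_)
      fun p hp => (hS p hp).squarefree
    simpa only [← Nat.coprime_iff_isRelPrime] using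
      (Nat.coprime_primes (hS p hp) (hS q hq)).mpr hpq
  ext m
  simp only [mem_image, mem_filter, mem_powerset, Nat.mem_divisors]
  constructor
  · rintro ⟨T, ⟨hTS, hTk⟩, rfl⟩
    rw [Nat.primeFactors_prod fun p hp => hS p (hTS hp)]
    exact ⟨⟨prod_dvd_prod_of_subset _ _ _ hTS, hS0⟩, hTk⟩
  · rintro ⟨⟨hmS, -⟩, hmk⟩
    refine ⟨m.primeFactors, ⟨?_, hmk⟩,
      Nat.prod_primeFactors_of_squarefree (hsqf.squarefree_of_dvd hmS)⟩
    simpa [Nat.primeFactors_prod hS] using Nat.primeFactors_mono hmS hS0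

section Sieve

variable {ι : Type*} [Fintype ι] {S : ι → Finset ℕ} {k : ι → ℕ}

theorem subset_of_mem_piFinset_powerset [DecidableEq ι] {τ : ι → Finset ℕ}
    (hτ : τ ∈ Fintype.piFinset fun j => {T ∈ (S j).powerset | #T ≤ k j}) (j : ι) :
    τ j ⊆ S j :=
  mem_powerset.mp (mem_filter.mp (Fintype.mem_piFinset.mp hτ j)).1

theorem prime_of_mem_biUnion_of_mem_piFinset [DecidableEq ι] (hS : ∀ j, ∀ p ∈ S j, p.Prime)
    {τ : ι → Finset ℕ}
    (hτ : τ ∈ Fintype.piFinset fun j => {T ∈ (S j).powerset | #T ≤ k j}) :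
    ∀ p ∈ univ.biUnion τ, p.Prime := fun p hp => by
  obtain ⟨j, -, hpj⟩ := mem_biUnion.mp hp
  exact hS j p (subset_of_mem_piFinset_powerset hτ j hpj)

theorem prod_prod_dvd_of_mem_piFinset [DecidableEq ι]
    (hdisj : ∀ i j, i ≠ j → Disjoint (S i) (S j)) {τ : ι → Finset ℕ}
    (hτ : τ ∈ Fintype.piFinset fun j => {T ∈ (S j).powerset | #T ≤ k j}) :
    ∏ j, ∏ p ∈ τ j, p ∣ ∏ p ∈ univ.biUnion S, p := by
  rw [prod_prod_eq_prod_biUnion hdisj (subset_of_mem_piFinset_powerset hτ)]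
  exact prod_dvd_prod_of_subset _ _ _
    (biUnion_mono fun j _ => subset_of_mem_piFinset_powerset hτ j)

theorem coprime_indicator_le_prod_bonferroniSum [CommRing R] [LinearOrder R]
    [IsStrictOrderedRing R] (hS : ∀ j, ∀ p ∈ S j, p.Prime)
    (hdisj : ∀ i j, i ≠ j → Disjoint (S i) (S j)) (hk : ∀ j, Even (k j)) (a : ℕ) :
    (if a.Coprime (∏ p ∈ univ.biUnion S, p) then (1 : R) else 0) ≤
      ∏ j, bonferroniSum (S j) (fun p => if p ∣ a then 1 else 0) (k j) := by
  have hw : ∀ p : ℕ, 0 ≤ (if p ∣ a then (1 : R) else 0) ∧ (if p ∣ a then (1 : R) else 0) ≤ 1 :=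
    fun p => by split_ifs <;> norm_num
  have hind : (if a.Coprime (∏ p ∈ univ.biUnion S, p) then (1 : R) else 0) =
      ∏ j, ∏ p ∈ S j, (1 - if p ∣ a then 1 else 0) := by
    have hnot : ∀ p : ℕ, (1 - if p ∣ a then (1 : R) else 0) = if ¬p ∣ a then 1 else 0 :=
      fun p => by split_ifs <;> simp
    rw [prod_prod_eq_prod_biUnion hdisj fun _ => subset_rfl]
    simp only [hnot, prod_boole, Nat.coprime_prod_right_iff]
    refine if_congr (forall₂_congr fun p hp => ?_) rfl rfl
    obtain ⟨j, -, hpj⟩ := mem_biUnion.mp hp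
    exact Nat.coprime_comm.trans (hS j p hpj).coprime_iff_not_dvd
  rw [hind]
  exact prod_le_prod (fun j _ => prod_nonneg fun p _ => sub_nonneg.mpr (hw p).2)
    fun j _ => prod_one_sub_le_bonferroniSum (fun p _ => hw p) (hk j)

theorem sum_prod_bonferroniSum_dvd [DecidableEq ι] [CommRing R] (A : Finset ℕ)
    (hS : ∀ j, ∀ p ∈ S j, p.Prime) (hdisj : ∀ i j, i ≠ j → Disjoint (S i) (S j)) (k : ι → ℕ) :
    ∑ a ∈ A, ∏ j, bonferroniSum (S j) (fun p => if p ∣ a then (1 : R) else 0) (k j) =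
      ∑ τ ∈ Fintype.piFinset fun j => {T ∈ (S j).powerset | #T ≤ k j},
        (∏ j, (-1 : R) ^ #(τ j)) * #{a ∈ A | ∏ j, ∏ p ∈ τ j, p ∣ a} := by
  simp only [prod_bonferroniSum]
  rw [sum_comm]
  refine sum_congr rfl fun τ hτ => ?_
  have hτS := subset_of_mem_piFinset_powerset hτ
  have hdvd : ∀ a, ∏ j, ∏ p ∈ τ j, (if p ∣ a then (1 : R) else 0) =
      if ∏ j, ∏ p ∈ τ j, p ∣ a then 1 else 0 := fun a => by
    rw [prod_prod_eq_prod_biUnion hdisj hτS, prod_prod_eq_prod_biUnion hdisj hτS, prod_boole]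
    exact if_congr (prod_primes_dvd_iff (prime_of_mem_biUnion_of_mem_piFinset hS hτ) a).symm
      rfl rfl
  simp only [hdvd, ← mul_sum, sum_boole]

theorem prod_bonferroniSum_multiplicative [DecidableEq ι] [CommRing R] {g : ℕ → R}
    (hg1 : g 1 = 1) (hgmult : ∀ m n : ℕ, m.Coprime n → g (m * n) = g m * g n)
    (hS : ∀ j, ∀ p ∈ S j, p.Prime)
    (hdisj : ∀ i j, i ≠ j → Disjoint (S i) (S j)) (k : ι → ℕ) :
    ∏ j, bonferroniSum (S j) g (k j) =
      ∑ τ ∈ Fintype.piFinset fun j => {T ∈ (S j).powerset | #T ≤ k j},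
        (∏ j, (-1) ^ #(τ j)) * g (∏ j, ∏ p ∈ τ j, p) := by
  rw [prod_bonferroniSum]
  refine sum_congr rfl fun τ hτ => ?_
  have hτS := subset_of_mem_piFinset_powerset hτ
  rw [prod_prod_eq_prod_biUnion hdisj hτS, prod_prod_eq_prod_biUnion hdisj hτS,
    map_prod_primes hg1 hgmult (prime_of_mem_biUnion_of_mem_piFinset hS hτ)]

theorem sum_piFinset_powerset_eq_sum_piFinset_divisors [DecidableEq ι] {M : Type*}
    [AddCommMonoid M]    (hS : ∀ j, ∀ p ∈ S j, p.Prime) (k : ι → ℕ) (F : (ι → ℕ) → M) :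
    ∑ τ ∈ Fintype.piFinset fun j => {T ∈ (S j).powerset | #T ≤ k j},
        F (fun j => ∏ p ∈ τ j, p) =
      ∑ d ∈ Fintype.piFinset fun j => {m ∈ (∏ p ∈ S j, p).divisors | #m.primeFactors ≤ k j},
        F d := by
  simp only [← image_prod_filter_powerset (hS _), Fintype.piFinset_image]
  refine (sum_image fun τ hτ τ' hτ' h => funext fun j => ?_).symm
  have := congrArg Nat.primeFactors (congrFun h j)
  rwa [Nat.primeFactors_prod fun p hp => hS j p (subset_of_mem_piFinset_powerset hτ j hp),
    Nat.primeFactors_prod fun p hp => hS j p (subset_of_mem_piFinset_powerset hτ' j hp)] at this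

theorem sum_prod_bonferroniSum_eq_main_add_remainder [DecidableEq ι] [CommRing R] (A : Finset ℕ)
    {X : R} {g r : ℕ → R} (hg1 : g 1 = 1)
    (hgmult : ∀ m n : ℕ, m.Coprime n → g (m * n) = g m * g n) (hS : ∀ j, ∀ p ∈ S j, p.Prime)
    (hdisj : ∀ i j, i ≠ j → Disjoint (S i) (S j)) (k : ι → ℕ)
    (hAd : ∀ d : ℕ, d ∣ ∏ p ∈ univ.biUnion S, p → (#{a ∈ A | d ∣ a} : R) = X * g d + r d) :
    ∑ a ∈ A, ∏ j, bonferroniSum (S j) (fun p => if p ∣ a then (1 : R) else 0) (k j) =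
      X * ∏ j, bonferroniSum (S j) g (k j) +
        ∑ τ ∈ Fintype.piFinset fun j => {T ∈ (S j).powerset | #T ≤ k j},
          (∏ j, (-1) ^ #(τ j)) * r (∏ j, ∏ p ∈ τ j, p) := by
  rw [sum_prod_bonferroniSum_dvd A hS hdisj k,
    prod_bonferroniSum_multiplicative hg1 hgmult hS hdisj k, mul_sum, ← sum_add_distrib]
  refine sum_congr rfl fun τ hτ => ?_
  rw [hAd _ (prod_prod_dvd_of_mem_piFinset hdisj hτ)]
  ring

theorem sum_sign_mul_le_sum_abs [DecidableEq ι] (hS : ∀ j, ∀ p ∈ S j, p.Prime) (k : ι → ℕ)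
    (r : ℕ → ℝ) :
    ∑ τ ∈ Fintype.piFinset fun j => {T ∈ (S j).powerset | #T ≤ k j},
        (∏ j, (-1 : ℝ) ^ #(τ j)) * r (∏ j, ∏ p ∈ τ j, p) ≤
      ∑ d ∈ Fintype.piFinset fun j => {m ∈ (∏ p ∈ S j, p).divisors | #m.primeFactors ≤ k j},
        |r (∏ j, d j)| := by
  rw [← sum_piFinset_powerset_eq_sum_piFinset_divisors hS k fun d => |r (∏ j, d j)|]
  exact sum_le_sum fun τ _ => (le_abs_self _).trans (by simp [abs_mul, abs_prod])

end Sieve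

theorem _root_.Real.sum_le_log_inv_prod_one_sub {S : Finset α} {x : α → ℝ}
    (hx : ∀ p ∈ S, x p < 1) :
    ∑ p ∈ S, x p ≤ Real.log (∏ p ∈ S, (1 - x p))⁻¹ := by
  rw [Real.log_inv, Real.log_prod fun p hp => (sub_pos.mpr (hx p hp)).ne', ← sum_neg_distrib]
  exact sum_le_sum fun p hp => by
    linarith [Real.log_le_sub_one_of_pos (sub_pos.mpr (hx p hp))]

theorem bonferroniSum_le_prod_one_sub_mul_exp [DecidableEq α] {S : Finset α} {x : α → ℝ}
    (hx : ∀ p ∈ S, 0 ≤ x p ∧ x p < 1) {k : ℕ} (hk : Even k) :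
    bonferroniSum S x k ≤ (∏ p ∈ S, (1 - x p)) *
      Real.exp (Real.exp (Real.log (∏ p ∈ S, (1 - x p))⁻¹) *
        (Real.log (∏ p ∈ S, (1 - x p))⁻¹) ^ (k + 1) / (k + 1)!) := by
  set V := ∏ p ∈ S, (1 - x p)
  set L := Real.log V⁻¹
  have hV : 0 < V := prod_pos fun p hp => sub_pos.mpr (hx p hp).2
  have hVL : V * Real.exp L = 1 := by
    rw [Real.exp_log (inv_pos.mpr hV), mul_inv_cancel₀ hV.ne']
  have htail : ∑ T ∈ S.powersetCard (k + 1), ∏ p ∈ T, x p ≤ L ^ (k + 1) / (k + 1)! := by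
    rw [le_div_iff₀ (by positivity), mul_comm]
    exact (factorial_mul_sum_powersetCard_prod_le (fun p hp => (hx p hp).1) _).trans
      (pow_le_pow_left₀ (sum_nonneg fun p hp => (hx p hp).1)
        (Real.sum_le_log_inv_prod_one_sub fun p hp => (hx p hp).2) _)
  calc bonferroniSum S x k
      ≤ V + L ^ (k + 1) / (k + 1)! :=
        (bonferroniSum_le_prod_one_sub_add (fun p hp => ⟨(hx p hp).1, (hx p hp).2.le⟩) hk).trans
          (by linarith)
    _ = V * (1 + Real.exp L * L ^ (k + 1) / (k + 1)!) := by
        rw [mul_add, mul_one, mul_div_assoc, ← mul_assoc, hVL, one_mul]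
    _ ≤ V * Real.exp (Real.exp L * L ^ (k + 1) / (k + 1)!) := by
        gcongr
        linarith [Real.add_one_le_exp (Real.exp L * L ^ (k + 1) / (k + 1)!)]

theorem prod_bonferroniSum_le_prod_one_sub_mul_exp {ι : Type*} [Fintype ι] [DecidableEq α]
    {S : ι → Finset α} (hdisj : ∀ i j, i ≠ j → Disjoint (S i) (S j)) {x : α → ℝ}
    (hx : ∀ j, ∀ p ∈ S j, 0 ≤ x p ∧ x p < 1) {k : ι → ℕ} (hk : ∀ j, Even (k j)) :
    ∏ j, bonferroniSum (S j) x (k j) ≤ (∏ p ∈ univ.biUnion S, (1 - x p)) *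
      Real.exp (∑ j, Real.exp (Real.log (∏ p ∈ S j, (1 - x p))⁻¹) *
        (Real.log (∏ p ∈ S j, (1 - x p))⁻¹) ^ (k j + 1) / (k j + 1)!) := by
  rw [← prod_prod_eq_prod_biUnion hdisj fun _ => subset_rfl, Real.exp_sum, ← prod_mul_distrib]
  refine prod_le_prod (fun j _ => ?_) fun j _ =>
    bonferroniSum_le_prod_one_sub_mul_exp (hx j) (hk j)
  exact (prod_nonneg fun p hp => sub_nonneg.mpr (hx j p hp).2.le).trans
    (prod_one_sub_le_bonferroniSum (fun p hp => ⟨(hx j p hp).1, (hx j p hp).2.le⟩) (hk j))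

end Finset

theorem brun_hooley_upper_general
    (A : Finset ℕ)
    (P : Finset ℕ) (hP : ∀ p ∈ P, Nat.Prime p)
    (X : ℝ) (hX : 0 < X)
    (g : ℕ → ℝ) (hg1 : g 1 = 1)
    (hgmult : ∀ m n : ℕ, Nat.Coprime m n → g (m * n) = g m * g n)
    (hgP : ∀ p ∈ P, 0 < g p ∧ g p < 1)
    (r : ℕ → ℝ)
    (hAd : ∀ d : ℕ, d ∣ ∏ p ∈ P, p →
      ((A.filter (fun a => d ∣ a)).card : ℝ) = X * g d + r d)
    (t : ℕ) (Pj : Fin t → Finset ℕ)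
    (hdisj : ∀ i j : Fin t, i ≠ j → Disjoint (Pj i) (Pj j))
    (hunion : Finset.univ.biUnion Pj = P)
    (k : Fin t → ℕ) (hkeven : ∀ j, Even (k j))
    (E R : ℝ)
    (hE : E = ∑ j : Fin t,
      Real.exp (Real.log (∏ p ∈ Pj j, (1 - g p))⁻¹) *
        (Real.log (∏ p ∈ Pj j, (1 - g p))⁻¹) ^ (k j + 1) /
          (Nat.factorial (k j + 1)))
    (hR : R = ∑ d ∈ Fintype.piFinset (fun j : Fin t =>
        (∏ p ∈ Pj j, p).divisors.filter (fun m => m.primeFactors.card ≤ k j)),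
      |r (∏ j : Fin t, d j)|) :
    ((A.filter (fun a => Nat.Coprime a (∏ p ∈ P, p))).card : ℝ) ≤
      X * (∏ p ∈ P, (1 - g p)) * Real.exp E + R := by
  subst hunion hE hR
  have hPj : ∀ j, Pj j ⊆ univ.biUnion Pj := fun j => subset_biUnion_of_mem Pj (mem_univ j)
  have hprime : ∀ j, ∀ p ∈ Pj j, p.Prime := fun j p hp => hP p (hPj j hp)
  have hg : ∀ j, ∀ p ∈ Pj j, 0 ≤ g p ∧ g p < 1 :=
    fun j p hp => ⟨(hgP p (hPj j hp)).1.le, (hgP p (hPj j hp)).2⟩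
  calc (#{a ∈ A | a.Coprime (∏ p ∈ univ.biUnion Pj, p)} : ℝ)
      ≤ ∑ a ∈ A, ∏ j, bonferroniSum (Pj j) (fun p => if p ∣ a then 1 else 0) (k j) := by
        rw [← sum_boole]
        exact sum_le_sum fun a _ => coprime_indicator_le_prod_bonferroniSum hprime hdisj hkeven a
    _ = X * ∏ j, bonferroniSum (Pj j) g (k j) +
          ∑ τ ∈ Fintype.piFinset fun j => {T ∈ (Pj j).powerset | #T ≤ k j},
            (∏ j, (-1) ^ #(τ j)) * r (∏ j, ∏ p ∈ τ j, p) :=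
        sum_prod_bonferroniSum_eq_main_add_remainder A hg1 hgmult hprime hdisj k hAd
    _ ≤ X * ((∏ p ∈ univ.biUnion Pj, (1 - g p)) * Real.exp _) + _ :=
        add_le_add (mul_le_mul_of_nonneg_left
          (prod_bonferroniSum_le_prod_one_sub_mul_exp hdisj hg hkeven) hX.le)
          (sum_sign_mul_le_sum_abs hprime k r)
    _ = _ := by ring

/-- **Brun–Hooley sieve, upper bound** (Ford–Halberstam).
Let `A` be a finite set of positive integers, `P` a finite set of primes,
and suppose `#{a ∈ A : d ∣ a} = X·g(d) + r_d` for every `d ∣ ∏_{p ∈ P} p`,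
where `g` is multiplicative with `0 < g(p) < 1` on `P` and `g(p) = 0` for primes
outside `P`.  Given a partition `Pj 1, …, Pj t` of `P` and even positive integers
`k 1, …, k t`, with `E = ∑ⱼ e^{Lⱼ} Lⱼ^{kⱼ+1}/(kⱼ+1)!` (where `Lⱼ = log Vⱼ⁻¹`,
`Vⱼ = ∏_{p ∈ Pj j}(1 - g p)`) and
`R = ∑_{dⱼ ∣ Pⱼ, ω(dⱼ) ≤ kⱼ} |r_{d₁⋯d_t}|`, one has
`#{a ∈ A : gcd(a, ∏_{p ∈ P} p) = 1} ≤ X · ∏_{p ∈ P}(1 - g p) · e^E + R`. -/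
theorem brun_hooley_upper
    (A : Finset ℕ) (hA : ∀ a ∈ A, 0 < a)
    (P : Finset ℕ) (hP : ∀ p ∈ P, Nat.Prime p)
    (X : ℝ) (hX : 0 < X)
    (g : ℕ → ℝ) (hg1 : g 1 = 1)
    (hgmult : ∀ m n : ℕ, Nat.Coprime m n → g (m * n) = g m * g n)
    (hgP : ∀ p ∈ P, 0 < g p ∧ g p < 1)
    (hgP' : ∀ p : ℕ, p.Prime → p ∉ P → g p = 0)
    (r : ℕ → ℝ)
    (hAd : ∀ d : ℕ, d ∣ ∏ p ∈ P, p →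
      ((A.filter (fun a => d ∣ a)).card : ℝ) = X * g d + r d)
    (t : ℕ) (Pj : Fin t → Finset ℕ)
    (hdisj : ∀ i j : Fin t, i ≠ j → Disjoint (Pj i) (Pj j))
    (hunion : Finset.univ.biUnion Pj = P)
    (k : Fin t → ℕ) (hkeven : ∀ j, Even (k j)) (hkpos : ∀ j, 0 < k j)
    (E R : ℝ)
    (hE : E = ∑ j : Fin t,
      Real.exp (Real.log (∏ p ∈ Pj j, (1 - g p))⁻¹) *
        (Real.log (∏ p ∈ Pj j, (1 - g p))⁻¹) ^ (k j + 1) /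
          (Nat.factorial (k j + 1)))
    (hR : R = ∑ d ∈ Fintype.piFinset (fun j : Fin t =>
        (∏ p ∈ Pj j, p).divisors.filter (fun m => m.primeFactors.card ≤ k j)),
      |r (∏ j : Fin t, d j)|) :
    ((A.filter (fun a => Nat.Coprime a (∏ p ∈ P, p))).card : ℝ) ≤
      X * (∏ p ∈ P, (1 - g p)) * Real.exp E + R :=
  brun_hooley_upper_general A P hP X hX g hg1 hgmult hgP r hAd t Pj hdisj hunion k hkeven E R hE hR
end

section
/- There exists an absolute constant c > 0 such that for all sufficiently large y, Σ_{a ≤ y, a even} 1/(τ(a)·φ(a)) ≥ c·(log y)^{1/2}, where the sum runs over even positive integers a ≤ y. -/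
/-!
Let `w m = 1 / (m τ(m))`. If `N = d e` is squarefree then `d, e` are coprime and
`τ(d) τ(e) = τ(N)`, so `∑_{de = N} w d w e = 1 / N`; hence the sum of `1 / N` over squarefree
`N ≤ x` is at most `(∑_{m ≤ x} w m)²`. Writing `n = b² N` with `N` squarefree and using
`∑ 1 / b² ≤ 2` shows that this squarefree sum is at least half the harmonic sum, so
`∑_{m ≤ x} w m ≥ (log (x + 1) / 2)^{1/2}`. Finally `τ(2m) φ(2m) ≤ 4 m τ(m)`, so the even sum up to
`y` is at least `¼ ∑_{m ≤ y/2} w m`.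
-/

open Finset

namespace Nat

theorem card_divisors_mul_le (m n : ℕ) : #(m * n).divisors ≤ #m.divisors * #n.divisors := by
  rw [Nat.divisors_mul]
  exact card_mul_le

theorem card_divisors_mul_totient_two_mul_le (m : ℕ) :
    #(2 * m).divisors * (2 * m).totient ≤ 4 * (m * #m.divisors) := by
  have hτ : #(2 * m).divisors ≤ 2 * #m.divisors := by
    simpa [Nat.Prime.divisors Nat.prime_two] using card_divisors_mul_le 2 m
  have hφ : (2 * m).totient ≤ 2 * m := totient_le _
  calc #(2 * m).divisors * (2 * m).totient ≤ (2 * #m.divisors) * (2 * m) := Nat.mul_le_mul hτ hφ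
    _ = 4 * (m * #m.divisors) := by ring

theorem filter_mul_eq_divisorsAntidiagonal {N x : ℕ} (hN : N ∈ Icc 1 x) :
    {p ∈ Icc 1 x ×ˢ Icc 1 x | p.1 * p.2 = N} = N.divisorsAntidiagonal := by
  ext ⟨a, b⟩
  simp only [mem_filter, mem_product, mem_Icc, mem_divisorsAntidiagonal] at hN ⊢
  constructor
  · rintro ⟨-, hab⟩
    exact ⟨hab, by omega⟩
  · rintro ⟨rfl, hab⟩
    have ha : 0 < a := Nat.pos_of_ne_zero (left_ne_zero_of_mul hab)
    have hb : 0 < b := Nat.pos_of_ne_zero (right_ne_zero_of_mul hab)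
    refine ⟨⟨⟨ha, ?_⟩, hb, ?_⟩, rfl⟩
    · exact (Nat.le_mul_of_pos_right a hb).trans hN.2
    · exact (Nat.le_mul_of_pos_left b ha).trans hN.2

end Nat

noncomputable def invMulCardDivisors (m : ℕ) : ℝ := ((m : ℝ) * #m.divisors)⁻¹

theorem invMulCardDivisors_nonneg (m : ℕ) : 0 ≤ invMulCardDivisors m := by
  unfold invMulCardDivisors; positivity

theorem sum_divisorsAntidiagonal_invMulCardDivisors {N : ℕ} (hN : Squarefree N) :
    ∑ p ∈ N.divisorsAntidiagonal, invMulCardDivisors p.1 * invMulCardDivisors p.2 = (N : ℝ)⁻¹ := by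
  have hterm : ∀ p ∈ N.divisorsAntidiagonal,
      invMulCardDivisors p.1 * invMulCardDivisors p.2 = ((N : ℝ) * #N.divisors)⁻¹ := by
    rintro ⟨a, b⟩ hp
    obtain ⟨rfl, -⟩ := Nat.mem_divisorsAntidiagonal.mp hp
    rw [invMulCardDivisors, invMulCardDivisors, ← mul_inv,
      (Nat.coprime_of_squarefree_mul hN).card_divisors_mul]
    push_cast
    ring
  have hcard : #N.divisorsAntidiagonal = #N.divisors := by
    rw [← Nat.map_div_right_divisors, card_map]
  have hτ : (#N.divisors : ℝ) ≠ 0 := by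
    exact_mod_cast (Nat.nonempty_divisors.mpr hN.ne_zero).card_pos.ne'
  rw [sum_congr rfl hterm, sum_const, hcard, nsmul_eq_mul, mul_inv, mul_left_comm,
    mul_inv_cancel₀ hτ, mul_one]

theorem sum_squarefree_inv_le_sq_sum_invMulCardDivisors (x : ℕ) :
    ∑ N ∈ Icc 1 x with Squarefree N, (N : ℝ)⁻¹ ≤ (∑ m ∈ Icc 1 x, invMulCardDivisors m) ^ 2 := by
  calc ∑ N ∈ Icc 1 x with Squarefree N, (N : ℝ)⁻¹
      = ∑ N ∈ Icc 1 x with Squarefree N, ∑ p ∈ Icc 1 x ×ˢ Icc 1 x with p.1 * p.2 = N,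
          invMulCardDivisors p.1 * invMulCardDivisors p.2 := by
        refine sum_congr rfl fun N hN => ?_
        obtain ⟨hNx, hsf⟩ := mem_filter.mp hN
        rw [Nat.filter_mul_eq_divisorsAntidiagonal hNx,
          sum_divisorsAntidiagonal_invMulCardDivisors hsf]
    _ ≤ ∑ p ∈ Icc 1 x ×ˢ Icc 1 x, invMulCardDivisors p.1 * invMulCardDivisors p.2 :=
        sum_fiberwise_le_sum_of_sum_fiber_nonneg fun _ _ => sum_nonneg fun _ _ =>
          mul_nonneg (invMulCardDivisors_nonneg _) (invMulCardDivisors_nonneg _)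
    _ = (∑ m ∈ Icc 1 x, invMulCardDivisors m) ^ 2 := by
        rw [sum_product, sq, sum_mul_sum]

theorem sum_Icc_inv_sq_le_two (x : ℕ) : ∑ b ∈ Icc 1 x, ((b : ℝ) ^ 2)⁻¹ ≤ 2 := by
  have h := sum_Ioo_inv_sq_le (α := ℝ) 0 (x + 1)
  have hIcc : Icc 1 x = Ioo 0 (x + 1) := by ext; simp; omega
  rw [hIcc]
  simpa using h

theorem sum_inv_le_two_mul_sum_squarefree_inv (x : ℕ) :
    ∑ n ∈ Icc 1 x, (n : ℝ)⁻¹ ≤ 2 * ∑ N ∈ Icc 1 x with Squarefree N, (N : ℝ)⁻¹ := by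
  set SF := {N ∈ Icc 1 x | Squarefree N}
  have hcover : Icc 1 x ⊆ (Icc 1 x ×ˢ SF).image fun p => p.1 ^ 2 * p.2 := by
    intro n hn
    obtain ⟨N, b, rfl, hsf⟩ := Nat.sq_mul_squarefree n
    have hn' := mem_Icc.mp hn
    have hb : 0 < b := Nat.pos_of_ne_zero fun h => by simp [h] at hn'
    have hN : 0 < N := Nat.pos_of_ne_zero fun h => by simp [h] at hn'
    refine mem_image.mpr ⟨(b, N), mem_product.mpr ⟨mem_Icc.mpr ⟨hb, ?_⟩,
      mem_filter.mpr ⟨mem_Icc.mpr ⟨hN, ?_⟩, hsf⟩⟩, rfl⟩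
    · exact (Nat.le_self_pow two_ne_zero b).trans ((Nat.le_mul_of_pos_right _ hN).trans hn'.2)
    · exact (Nat.le_mul_of_pos_left N (by positivity)).trans hn'.2
  calc ∑ n ∈ Icc 1 x, (n : ℝ)⁻¹
      ≤ ∑ n ∈ (Icc 1 x ×ˢ SF).image (fun p : ℕ × ℕ => p.1 ^ 2 * p.2), (n : ℝ)⁻¹ :=
        sum_le_sum_of_subset_of_nonneg hcover fun _ _ _ => by positivity
    _ ≤ ∑ p ∈ Icc 1 x ×ˢ SF, ((p.1 ^ 2 * p.2 : ℕ) : ℝ)⁻¹ :=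
        sum_image_le_of_nonneg fun _ _ => by positivity
    _ = (∑ b ∈ Icc 1 x, ((b : ℝ) ^ 2)⁻¹) * ∑ N ∈ SF, (N : ℝ)⁻¹ := by
        rw [sum_product, sum_mul_sum]
        push_cast
        simp_rw [mul_inv]
    _ ≤ 2 * ∑ N ∈ SF, (N : ℝ)⁻¹ :=
        mul_le_mul_of_nonneg_right (sum_Icc_inv_sq_le_two x) (sum_nonneg fun _ _ => by positivity)

theorem log_add_one_le_two_mul_sq_sum_invMulCardDivisors (x : ℕ) :
    Real.log (x + 1) ≤ 2 * (∑ m ∈ Icc 1 x, invMulCardDivisors m) ^ 2 := by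
  have hharmonic : Real.log (x + 1) ≤ ∑ n ∈ Icc 1 x, (n : ℝ)⁻¹ := by
    simpa [harmonic_eq_sum_Icc] using log_add_one_le_harmonic x
  linarith [sum_inv_le_two_mul_sum_squarefree_inv x,
    sum_squarefree_inv_le_sq_sum_invMulCardDivisors x]

theorem sum_invMulCardDivisors_le_four_mul_sum_even (n : ℕ) :
    ∑ m ∈ Icc 1 (n / 2), invMulCardDivisors m ≤
      4 * ∑ a ∈ Icc 1 n with Even a, (1 : ℝ) / (#a.divisors * a.totient) := by
  have hdouble : (Icc 1 (n / 2)).image (2 * ·) ⊆ {a ∈ Icc 1 n | Even a} := by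
    intro a ha
    obtain ⟨m, hm, rfl⟩ := mem_image.mp ha
    have := mem_Icc.mp hm
    exact mem_filter.mpr ⟨mem_Icc.mpr ⟨by omega, by omega⟩, even_two_mul m⟩
  have hterm : ∀ m ∈ Icc 1 (n / 2),
      invMulCardDivisors m ≤ 4 * ((1 : ℝ) / (#(2 * m).divisors * (2 * m).totient)) := by
    intro m hm
    have hm0 : m ≠ 0 := by have := mem_Icc.mp hm; omega
    have hpos : (0 : ℝ) < #(2 * m).divisors * (2 * m).totient := by
      have : 0 < #(2 * m).divisors * (2 * m).totient :=
        Nat.mul_pos (Nat.nonempty_divisors.mpr (by omega)).card_pos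
          (Nat.totient_pos.mpr (by omega))
      exact_mod_cast this
    have hmτ : (0 : ℝ) < m * #m.divisors := by
      have : 0 < m * #m.divisors :=
        Nat.mul_pos (Nat.pos_of_ne_zero hm0) (Nat.nonempty_divisors.mpr hm0).card_pos
      exact_mod_cast this
    have hle : (#(2 * m).divisors * (2 * m).totient : ℝ) ≤ 4 * (m * #m.divisors) := by
      exact_mod_cast Nat.card_divisors_mul_totient_two_mul_le m
    rw [mul_one_div, le_div_iff₀ hpos, invMulCardDivisors, inv_mul_le_iff₀ hmτ]
    linarith
  calc ∑ m ∈ Icc 1 (n / 2), invMulCardDivisors m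
      ≤ ∑ m ∈ Icc 1 (n / 2), 4 * ((1 : ℝ) / (#(2 * m).divisors * (2 * m).totient)) :=
        sum_le_sum hterm
    _ = 4 * ∑ a ∈ (Icc 1 (n / 2)).image (2 * ·), (1 : ℝ) / (#a.divisors * a.totient) := by
        rw [← mul_sum, sum_image fun _ _ _ _ h => by simpa using h]
    _ ≤ 4 * ∑ a ∈ Icc 1 n with Even a, (1 : ℝ) / (#a.divisors * a.totient) := by
        gcongr 4 * ?_
        exact sum_le_sum_of_subset_of_nonneg hdouble fun _ _ _ => by positivity

/-- There exists an absolute constant `c > 0` such that for all sufficiently large `y`,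
`∑_{a ≤ y, a even} 1/(τ(a)·φ(a)) ≥ c·(log y)^(1/2)`. -/
theorem sum_inv_tau_totient_even_lower :
    ∃ c : ℝ, 0 < c ∧ ∃ y₀ : ℝ, ∀ y : ℝ, y ≥ y₀ →
      (∑ a ∈ (Finset.Icc 1 ⌊y⌋₊).filter (fun a => Even a),
          (1 : ℝ) / (a.divisors.card * a.totient)) ≥
        c * (Real.log y) ^ ((1 : ℝ) / 2) := by
  refine ⟨1 / 8, by norm_num, 4, fun y hy => ?_⟩
  set n := ⌊y⌋₊
  set S := ∑ m ∈ Icc 1 (n / 2), invMulCardDivisors m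
  set T := ∑ a ∈ Icc 1 n with Even a, (1 : ℝ) / (#a.divisors * a.totient)
  have hy_lt : y < 2 * ((n / 2 : ℕ) + 1 : ℝ) := by
    have hn : ((n + 1 : ℕ) : ℝ) ≤ (2 * (n / 2 + 1) : ℕ) := by exact_mod_cast (by omega)
    push_cast at hn
    linarith [Nat.lt_floor_add_one y]
  have hlog : Real.log y ≤ 2 * Real.log ((n / 2 : ℕ) + 1) := by
    calc Real.log y ≤ Real.log (((n / 2 : ℕ) + 1 : ℝ) ^ 2) :=
          Real.log_le_log (by linarith) (by nlinarith)
      _ = 2 * Real.log ((n / 2 : ℕ) + 1) := by rw [Real.log_pow, Nat.cast_ofNat]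
  have hS := log_add_one_le_two_mul_sq_sum_invMulCardDivisors (n / 2)
  have hST : S ≤ 4 * T := sum_invMulCardDivisors_le_four_mul_sum_even n
  have hS0 : 0 ≤ S := sum_nonneg fun m _ => invMulCardDivisors_nonneg m
  have hlogT : Real.log y ≤ (8 * T) ^ 2 := by nlinarith
  rw [ge_iff_le, ← Real.sqrt_eq_rpow]
  linarith [(Real.sqrt_le_left (by positivity)).mpr hlogT]
end

section
/- There exists an absolute constant B > 0 such that for every integer l ≥ 0 and all x ≥ 16, Σ 1/φ(a) ≤ (0.5·log log x + B)^l / l!, where the sum runs over positive integers a ≤ x with a ∈ 𝓜 and ω(a) = l. -/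
/-!
Splitting an `a` with `ω(a) = l + 1` at any one of its `l + 1` prime factors, `a = pᵏ · b` with
`p ∤ b`, shows `(l + 1) S_{l+1} ≤ S_1 S_l`, where `S_l` is the sum of `1/φ(a)` over `a ≤ x` in `𝓜`
with `ω(a) = l`: both factors stay in `𝓜 ∩ [1, x]`, which is closed under divisors, and `1/φ` is
multiplicative. Hence `S_l ≤ S_1^l / l!`.

The prime powers in `𝓜` are powers of `2` or of primes `p ≡ 1 (mod 4)`, so
`S_1 ≤ ∑_{p ≤ x, p ≡ 1 (4)} 1/p + O(1)`. Put `s = 1 + 1/log x`. Since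
`1/p - p^{-s} ≤ (s - 1) log p / p`, Mertens' bound `∑_{p ≤ x} log p / p ≤ log x + log 4` costs
only `O(1)` in passing to `∑_{p ≡ 1 (4)} p^{-s} ≤ ½ ∑_p (1 + χ₄(p)) p^{-s}`. By the Euler products
this is at most `½ (log ζ(s) + log L(s, χ₄)) + O(1)`, where `ζ(s) ≤ s/(s - 1) = log x + 1` and
`L(s, χ₄) ≤ 1`.
-/

open Finset Real
open scoped Classical Nat

lemma summable_primes_neg_log_one_sub {f : ℕ →*₀ ℝ} (hsum : Summable (‖f ·‖)) :
    Summable fun p : Nat.Primes => -log (1 - f p) := by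
  have hf : Summable fun p : Nat.Primes => f p :=
    hsum.of_norm.comp_injective Subtype.val_injective
  simpa [sub_eq_add_neg] using (Real.summable_log_one_add_of_summable hf.neg).neg

lemma Real.exp_tsum_primes_neg_log_eq_tsum {f : ℕ →*₀ ℝ} (hsum : Summable (‖f ·‖)) :
    rexp (∑' p : Nat.Primes, -log (1 - f p)) = ∑' n, f n := by
  have hlt (p : Nat.Primes) : f p < 1 :=
    (le_abs_self _).trans_lt (hsum.of_norm.norm_lt_one (f := f.toMonoidHom) p.prop.one_lt)
  have H := (summable_primes_neg_log_one_sub hsum).hasSum.rexp.tprod_eq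
  simp only [Function.comp_apply, Real.exp_neg, Real.exp_log (sub_pos.2 (hlt _))] at H
  exact H.symm.trans (EulerProduct.eulerProduct_completely_multiplicative_tprod hsum)

lemma tsum_monoidWithZeroHom_pos {f : ℕ →*₀ ℝ} (hsum : Summable (‖f ·‖)) : 0 < ∑' n, f n :=
  Real.exp_tsum_primes_neg_log_eq_tsum hsum ▸ Real.exp_pos _

lemma le_neg_log_one_sub_add {x : ℝ} (hx : |x| ≤ 1 / 2) : x ≤ -log (1 - x) + 2 * x ^ 2 := by
  have h := Real.abs_log_sub_add_sum_range_le (hx.trans_lt (by norm_num)) 1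
  rw [sum_range_one, zero_add, pow_one, Nat.cast_zero, zero_add, div_one, sq_abs] at h
  have : x ^ 2 / (1 - |x|) ≤ 2 * x ^ 2 := by
    rw [div_le_iff₀ (by linarith)]; nlinarith [abs_nonneg x, sq_nonneg x]
  linarith [le_abs_self (x + log (1 - x))]

noncomputable def primeZetaTwo : ℝ := ∑' p : Nat.Primes, ((p : ℝ) ^ 2)⁻¹

lemma summable_primes_inv_sq : Summable fun p : Nat.Primes => ((p : ℝ) ^ 2)⁻¹ :=
  (Real.summable_nat_pow_inv.mpr one_lt_two).comp_injective Subtype.val_injective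

lemma primeZetaTwo_nonneg : 0 ≤ primeZetaTwo := tsum_nonneg fun _ => by positivity

lemma tsum_primes_le_log_tsum_add {f : ℕ →*₀ ℝ} (hsum : Summable (‖f ·‖))
    (hf : ∀ p : Nat.Primes, |f p| ≤ (p : ℝ)⁻¹) :
    ∑' p : Nat.Primes, f p ≤ log (∑' n, f n) + 2 * primeZetaTwo := by
  have hlog := summable_primes_neg_log_one_sub hsum
  have hle (p : Nat.Primes) : f p ≤ -log (1 - f p) + 2 * ((p : ℝ) ^ 2)⁻¹ := by
    have hp : (2 : ℝ) ≤ p := by exact_mod_cast p.prop.two_le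
    have hfp : |f p| ≤ 1 / 2 := (hf p).trans (by rw [one_div]; exact inv_anti₀ (by norm_num) hp)
    have hsq : f p ^ 2 ≤ ((p : ℝ) ^ 2)⁻¹ := by
      rw [← sq_abs, ← inv_pow]; exact pow_le_pow_left₀ (abs_nonneg _) (hf p) 2
    linarith [le_neg_log_one_sub_add hfp]
  rw [← Real.exp_tsum_primes_neg_log_eq_tsum hsum, Real.log_exp, primeZetaTwo,
    ← tsum_mul_left, ← hlog.tsum_add (summable_primes_inv_sq.mul_left 2)]
  exact (hsum.of_norm.comp_injective Subtype.val_injective).tsum_le_tsum hle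
    (hlog.add (summable_primes_inv_sq.mul_left 2))

noncomputable def natRpowNeg (s : ℝ) (hs : s ≠ 0) : ℕ →*₀ ℝ where
  toFun n := (n : ℝ) ^ (-s)
  map_zero' := by simp [Real.zero_rpow (neg_ne_zero.mpr hs)]
  map_one' := by simp
  map_mul' m n := by simp [Real.mul_rpow]

@[simp] lemma natRpowNeg_apply {s : ℝ} (hs : s ≠ 0) (n : ℕ) :
    natRpowNeg s hs n = (n : ℝ) ^ (-s) := rfl

noncomputable def chiFour : ℕ →*₀ ℝ where
  toFun n := ZMod.χ₄ n
  map_zero' := by simp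
  map_one' := by simp
  map_mul' m n := by rw [Nat.cast_mul, map_mul, Int.cast_mul]

lemma chiFour_apply (n : ℕ) : chiFour n = (ZMod.χ₄ n : ℝ) := rfl

lemma chiFour_mul_natRpowNeg_apply {s : ℝ} (hs : s ≠ 0) (n : ℕ) :
    (chiFour * natRpowNeg s hs) n = chiFour n * (n : ℝ) ^ (-s) := rfl

lemma abs_chiFour_le_one (n : ℕ) : |chiFour n| ≤ 1 := by
  rw [chiFour_apply]
  rcases ZMod.isQuadratic_χ₄ (n : ZMod 4) with h | h | h <;> simp [h]

lemma rpow_neg_le_inv {x s : ℝ} (hx : 1 ≤ x) (hs : 1 ≤ s) : x ^ (-s) ≤ x⁻¹ := by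
  rw [← Real.rpow_neg_one]
  exact Real.rpow_le_rpow_of_exponent_le hx (by linarith)

lemma summable_norm_natRpowNeg {s : ℝ} (hs : 1 < s) :
    Summable (‖natRpowNeg s (by positivity) ·‖) := by
  simpa [abs_of_nonneg, Real.rpow_nonneg] using
    Real.summable_nat_rpow.mpr (neg_lt_neg hs)

lemma summable_norm_chiFour_mul_natRpowNeg {s : ℝ} (hs : 1 < s) :
    Summable (‖(chiFour * natRpowNeg s (by positivity)) ·‖) := by
  refine (summable_norm_natRpowNeg hs).of_nonneg_of_le (fun _ => norm_nonneg _) fun n => ?_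
  rw [chiFour_mul_natRpowNeg_apply, norm_mul]
  exact mul_le_of_le_one_left (norm_nonneg _) (abs_chiFour_le_one n)

lemma tsum_natRpowNeg_le {s : ℝ} (hs : 1 < s) :
    ∑' n, natRpowNeg s (by positivity) n ≤ s / (s - 1) := by
  have h := ZetaAsymptotics.zeta_limit_aux1 hs
  have hterm : 0 ≤ s * ZetaAsymptotics.termTSum s :=
    mul_nonneg (by linarith) (tsum_nonneg fun _ => ZetaAsymptotics.term_nonneg _ _)
  rw [(summable_norm_natRpowNeg hs).of_norm.tsum_eq_zero_add]
  have hshift (n : ℕ) : natRpowNeg s (by positivity) (n + 1) = 1 / ((n : ℝ) + 1) ^ s := by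
    rw [natRpowNeg_apply, Real.rpow_neg (by positivity), one_div, Nat.cast_succ]
  simp only [hshift, natRpowNeg_apply, Nat.cast_zero,
    Real.zero_rpow (neg_ne_zero.mpr (by positivity : s ≠ 0)), zero_add]
  have : 1 + 1 / (s - 1) = s / (s - 1) := by rw [one_add_div (by linarith), sub_add_cancel]
  linarith

lemma tsum_chiFour_mul_natRpowNeg_le_one {s : ℝ} (hs : 1 < s) :
    ∑' n, (chiFour * natRpowNeg s (by positivity)) n ≤ 1 := by
  -- `1 - 3^{-s} + 5^{-s} - ⋯` alternates with decreasing terms, so it is at most its first term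
  set g : ℕ → ℝ := fun k => ((2 * k + 1 : ℕ) : ℝ) ^ (-s)
  have hodd (k : ℕ) : (chiFour * natRpowNeg s (by positivity)) (2 * k + 1) = (-1) ^ k * g k := by
    rw [chiFour_mul_natRpowNeg_apply, chiFour_apply, ZMod.χ₄_eq_neg_one_pow (by omega)]
    simp [g, show (2 * k + 1) / 2 = k by omega]
  have hsupp : Function.support (chiFour * natRpowNeg s (by positivity))
      ⊆ Set.range (fun k : ℕ => 2 * k + 1) := by
    intro n hn
    obtain ⟨k, rfl | rfl⟩ := Nat.even_or_odd' n
    · refine absurd ?_ hn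
      rw [chiFour_mul_natRpowNeg_apply, chiFour_apply, ZMod.χ₄_nat_eq_if_mod_four]
      simp
    · exact ⟨k, rfl⟩
  have hinj : Function.Injective (fun k : ℕ => 2 * k + 1) := fun a b h => by simp at h; omega
  have hsum := ((summable_norm_chiFour_mul_natRpowNeg hs).of_norm.comp_injective hinj)
  rw [← hinj.tsum_eq hsupp]
  simp only [Function.comp_def, hodd] at hsum ⊢
  have hanti : Antitone g := fun a b hab => by
    simp only [g]
    exact Real.rpow_le_rpow_of_nonpos (by positivity) (by gcongr) (by linarith)
  simpa [g] using hanti.tendsto_le_alternating_series hsum.hasSum.tendsto_sum_nat 0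

lemma tsum_primes_rpow_neg_le {s : ℝ} (hs : 1 < s) :
    ∑' p : Nat.Primes, (p : ℝ) ^ (-s) ≤ log (s / (s - 1)) + 2 * primeZetaTwo := by
  have hsum := summable_norm_natRpowNeg hs
  have h := tsum_primes_le_log_tsum_add hsum fun p => by
    rw [natRpowNeg_apply, abs_of_nonneg (by positivity)]
    exact rpow_neg_le_inv (by exact_mod_cast p.prop.one_le) hs.le
  have hlog := Real.log_le_log (tsum_monoidWithZeroHom_pos hsum) (tsum_natRpowNeg_le hs)
  simp only [natRpowNeg_apply] at h hlog
  linarith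

lemma tsum_primes_chiFour_mul_rpow_neg_le {s : ℝ} (hs : 1 < s) :
    ∑' p : Nat.Primes, chiFour p * (p : ℝ) ^ (-s) ≤ 2 * primeZetaTwo := by
  have hsum := summable_norm_chiFour_mul_natRpowNeg hs
  have h := tsum_primes_le_log_tsum_add hsum fun p => by
    rw [chiFour_mul_natRpowNeg_apply, abs_mul,
      abs_of_nonneg (by positivity : (0 : ℝ) ≤ (p : ℝ) ^ (-s))]
    exact (mul_le_of_le_one_left (by positivity) (abs_chiFour_le_one p)).trans
      (rpow_neg_le_inv (by exact_mod_cast p.prop.one_le) hs.le)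
  have hlog := Real.log_nonpos (tsum_monoidWithZeroHom_pos hsum).le
    (tsum_chiFour_mul_natRpowNeg_le_one hs)
  simp only [chiFour_mul_natRpowNeg_apply] at h hlog
  linarith

lemma sum_le_tsum_primes {s : Finset ℕ} (hs : ∀ p ∈ s, p.Prime) {f : ℕ → ℝ}
    (hf : ∀ p, p.Prime → 0 ≤ f p) (hsum : Summable fun p : Nat.Primes => f p) :
    ∑ p ∈ s, f p ≤ ∑' p : Nat.Primes, f p := by
  rw [Nat.Primes.tsum_eq_tsum_ite]
  calc ∑ p ∈ s, f p = ∑ p ∈ s, if p.Prime then f p else 0 :=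
        sum_congr rfl fun p hp => (if_pos (hs p hp)).symm
    _ ≤ _ := ((Nat.Primes.summable_iff_summable_ite f).mp hsum).sum_le_tsum s
        fun n _ => by split_ifs with h; exacts [hf n h, le_rfl]

lemma sum_primes_one_mod_four_rpow_neg_le {s : ℝ} (hs : 1 < s) (N : ℕ) :
    ∑ p ∈ (Nat.primesLE N).filter (· % 4 = 1), (p : ℝ) ^ (-s)
      ≤ log (s / (s - 1)) / 2 + 2 * primeZetaTwo := by
  have hsum_zeta : Summable fun p : Nat.Primes => (p : ℝ) ^ (-s) :=
    (summable_norm_natRpowNeg hs).of_norm.comp_injective Subtype.val_injective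
  have hsum_chi : Summable fun p : Nat.Primes => chiFour p * (p : ℝ) ^ (-s) :=
    (summable_norm_chiFour_mul_natRpowNeg hs).of_norm.comp_injective Subtype.val_injective
  have hweight : ∑ p ∈ (Nat.primesLE N).filter (· % 4 = 1), (p : ℝ) ^ (-s)
      = ∑ p ∈ (Nat.primesLE N).filter (· % 4 = 1), (1 + chiFour p) / 2 * (p : ℝ) ^ (-s) := by
    refine sum_congr rfl fun p hp => ?_
    rw [chiFour_apply, ZMod.χ₄_nat_one_mod_four (mem_filter.mp hp).2]
    norm_num
  have hle := sum_le_tsum_primes (s := (Nat.primesLE N).filter (· % 4 = 1))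
    (f := fun p => (1 + chiFour p) / 2 * (p : ℝ) ^ (-s))
    (fun p hp => (Nat.mem_primesLE.mp (mem_filter.mp hp).1).2)
    (fun p _ => mul_nonneg (by linarith [neg_abs_le (chiFour p), abs_chiFour_le_one p])
      (by positivity))
    ((hsum_zeta.add hsum_chi).div_const 2 |>.congr fun p => by ring)
  have hsplit : ∑' p : Nat.Primes, (1 + chiFour p) / 2 * (p : ℝ) ^ (-s)
      = (∑' p : Nat.Primes, (p : ℝ) ^ (-s)
          + ∑' p : Nat.Primes, chiFour p * (p : ℝ) ^ (-s)) / 2 := by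
    rw [← hsum_zeta.tsum_add hsum_chi, ← tsum_div_const]
    exact tsum_congr fun p => by ring
  linarith [tsum_primes_rpow_neg_le hs, tsum_primes_chiFour_mul_rpow_neg_le hs]

lemma Nat.div_le_factorization_factorial {p : ℕ} (hp : p.Prime) (n : ℕ) :
    n / p ≤ (n !).factorization p := by
  rw [Nat.factorization_factorial hp (Nat.lt_add_of_pos_right two_pos : Nat.log p n < _)]
  simpa using single_le_sum (f := fun i => n / p ^ i) (fun _ _ => Nat.zero_le _)
    (by simp : 1 ∈ Ico 1 (Nat.log p n + 2))

lemma sum_primesLE_div_mul_log_le_log_factorial (N : ℕ) :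
    ∑ p ∈ Nat.primesLE N, ((N / p : ℕ) : ℝ) * log p ≤ log (N ! : ℕ) := by
  rw [Real.log_nat_eq_sum_factorization, Finsupp.sum, Nat.support_factorization]
  calc ∑ p ∈ Nat.primesLE N, ((N / p : ℕ) : ℝ) * log p
      ≤ ∑ p ∈ Nat.primesLE N, (((N !).factorization p : ℕ) : ℝ) * log p := by
        refine sum_le_sum fun p hp => mul_le_mul_of_nonneg_right ?_
          (Real.log_nonneg (Nat.one_le_cast.mpr (Nat.mem_primesLE.mp hp).2.one_le))
        exact_mod_cast Nat.div_le_factorization_factorial (Nat.mem_primesLE.mp hp).2 N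
    _ ≤ _ := by
        refine sum_le_sum_of_subset_of_nonneg (fun p hp => ?_) fun p hp _ => ?_
        · obtain ⟨hpN, hp⟩ := Nat.mem_primesLE.mp hp
          exact Nat.mem_primeFactors.mpr ⟨hp, Nat.dvd_factorial hp.pos hpN, Nat.factorial_ne_zero N⟩
        · exact mul_nonneg (Nat.cast_nonneg _)
            (Real.log_nonneg (Nat.one_le_cast.mpr (Nat.prime_of_mem_primeFactors hp).one_le))

lemma sum_primesLE_log_div_le (N : ℕ) :
    ∑ p ∈ Nat.primesLE N, log p / p ≤ log N + log 4 := by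
  rcases N.eq_zero_or_pos with rfl | hN
  · simp [Nat.primesLE]; positivity
  have hNR : (0 : ℝ) < N := by exact_mod_cast hN
  have hfloor (p : ℕ) (hp : p ∈ Nat.primesLE N) :
      (N : ℝ) / p * log p ≤ ((N / p : ℕ) + 1) * log p := by
    refine mul_le_mul_of_nonneg_right ?_
      (Real.log_nonneg (Nat.one_le_cast.mpr (Nat.mem_primesLE.mp hp).2.one_le))
    rw [← Nat.floor_div_eq_div (K := ℝ)]
    exact (Nat.lt_floor_add_one _).le
  have hfact : log (N ! : ℕ) ≤ N * log N := by
    rw [← Real.log_pow]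
    exact Real.log_le_log (by positivity) (by exact_mod_cast Nat.factorial_le_pow N)
  have htheta : ∑ p ∈ Nat.primesLE N, log p ≤ log 4 * N := by
    rw [← Chebyshev.theta_eq_sum_primesLE_log]
    exact Chebyshev.theta_le_log4_mul_x hNR.le
  have hmain : N * ∑ p ∈ Nat.primesLE N, log p / p ≤ N * (log N + log 4) := by
    calc N * ∑ p ∈ Nat.primesLE N, log p / p = ∑ p ∈ Nat.primesLE N, (N : ℝ) / p * log p := by
          rw [mul_sum]; exact sum_congr rfl fun p _ => by ring
      _ ≤ ∑ p ∈ Nat.primesLE N, ((N / p : ℕ) + 1) * log p := sum_le_sum hfloor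
      _ = ∑ p ∈ Nat.primesLE N, ((N / p : ℕ) : ℝ) * log p + ∑ p ∈ Nat.primesLE N, log p := by
          rw [← sum_add_distrib]; exact sum_congr rfl fun p _ => by ring
      _ ≤ N * (log N + log 4) := by linarith [sum_primesLE_div_mul_log_le_log_factorial N]
  exact le_of_mul_le_mul_left hmain hNR

lemma inv_le_rpow_neg_add {y : ℝ} (hy : 0 < y) (s : ℝ) :
    y⁻¹ ≤ y ^ (-s) + (s - 1) * (log y / y) := by
  have key : 1 - (s - 1) * log y ≤ rexp (-((s - 1) * log y)) := by
    linarith [Real.add_one_le_exp (-((s - 1) * log y))]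
  have hys : y ^ (-s) = y⁻¹ * rexp (-((s - 1) * log y)) := by
    rw [Real.rpow_def_of_pos hy, ← Real.exp_log (inv_pos.mpr hy), ← Real.exp_add, Real.log_inv]
    ring_nf
  rw [hys, div_eq_mul_inv]
  nlinarith [inv_pos.mpr hy]

lemma sum_primes_one_mod_four_inv_le {x : ℝ} (hx : rexp 1 ≤ x) :
    ∑ p ∈ (Nat.primesLE ⌊x⌋₊).filter (· % 4 = 1), (p : ℝ)⁻¹
      ≤ log (log x) / 2 + (1 + log 2 / 2 + log 4 + 2 * primeZetaTwo) := by
  set F := (Nat.primesLE ⌊x⌋₊).filter (· % 4 = 1)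
  have hx0 : 0 < x := (Real.exp_pos 1).trans_le hx
  have hL : 1 ≤ log x := by rwa [Real.le_log_iff_exp_le hx0]
  -- with `s - 1 = 1 / log x`, `(s - 1) ∑_{p ≤ x} log p / p = O(1)` and `s / (s - 1) = log x + 1`
  set s := 1 + (log x)⁻¹ with hs_def
  have hs : 1 < s := lt_add_of_pos_right 1 (by positivity)
  have hprime (p) (hp : p ∈ F) : p.Prime := (Nat.mem_primesLE.mp (mem_filter.mp hp).1).2
  have hcut : ∑ p ∈ F, (p : ℝ)⁻¹
      ≤ ∑ p ∈ F, (p : ℝ) ^ (-s) + (log x)⁻¹ * ∑ p ∈ F, log p / p := by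
    rw [mul_sum, ← sum_add_distrib]
    refine sum_le_sum fun p hp => ?_
    have := inv_le_rpow_neg_add (Nat.cast_pos.mpr (hprime p hp).pos) s
    rwa [hs_def, add_sub_cancel_left] at this
  have hzeta : log (s / (s - 1)) ≤ log 2 + log (log x) := by
    rw [← Real.log_mul two_ne_zero (by positivity)]
    refine Real.log_le_log (div_pos (by linarith) (by linarith)) ?_
    rw [hs_def, add_sub_cancel_left, div_le_iff₀ (by positivity)]
    field_simp
    linarith
  have hmertens : (log x)⁻¹ * ∑ p ∈ F, log p / p ≤ 1 + log 4 := by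
    have hsub : ∑ p ∈ F, log p / p ≤ ∑ p ∈ Nat.primesLE ⌊x⌋₊, log p / p :=
      sum_le_sum_of_subset_of_nonneg (filter_subset _ _) fun p _ _ => by positivity
    have hN : log ⌊x⌋₊ ≤ log x := by
      rcases Nat.eq_zero_or_pos ⌊x⌋₊ with h | h
      · rw [h, Nat.cast_zero, Real.log_zero]; linarith
      · exact Real.log_le_log (by exact_mod_cast h) (Nat.floor_le hx0.le)
    rw [inv_mul_le_iff₀ (by linarith)]
    nlinarith [sum_primesLE_log_div_le ⌊x⌋₊, Real.log_nonneg (by norm_num : (1 : ℝ) ≤ 4)]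
  linarith [sum_primes_one_mod_four_rpow_neg_le hs ⌊x⌋₊]

section OmegaLevel

noncomputable def omegaLevel (P : ℕ → Prop) (N l : ℕ) : Finset ℕ :=
  (Icc 1 N).filter fun a => P a ∧ a.primeFactors.card = l

noncomputable def omegaSum (P : ℕ → Prop) (f : ℕ → ℝ) (N l : ℕ) : ℝ :=
  ∑ a ∈ omegaLevel P N l, f a

variable {P : ℕ → Prop} {f : ℕ → ℝ}

lemma mem_omegaLevel {N l a : ℕ} :
    a ∈ omegaLevel P N l ↔ (1 ≤ a ∧ a ≤ N) ∧ P a ∧ a.primeFactors.card = l := by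
  rw [omegaLevel, mem_filter, mem_Icc]

lemma mem_omegaLevel_of_dvd (hP : ∀ {a d : ℕ}, d ∣ a → P a → P d) {N k l a d : ℕ}
    (ha : a ∈ omegaLevel P N k) (hd : d ∣ a) (hdl : d.primeFactors.card = l) :
    d ∈ omegaLevel P N l := by
  obtain ⟨⟨ha1, haN⟩, hPa, -⟩ := mem_omegaLevel.mp ha
  exact mem_omegaLevel.mpr ⟨⟨Nat.pos_of_dvd_of_pos hd ha1, (Nat.le_of_dvd ha1 hd).trans haN⟩,
    hP hd hPa, hdl⟩

lemma Nat.primeFactors_ordProj {a p : ℕ} (hp : p ∈ a.primeFactors) :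
    (ordProj[p] a).primeFactors = {p} :=
  Nat.primeFactors_prime_pow (Finsupp.mem_support_iff.mp (Nat.support_factorization a ▸ hp))
    (Nat.prime_of_mem_primeFactors hp)

lemma Nat.primeFactors_ordCompl (a p : ℕ) :
    (ordCompl[p] a).primeFactors = a.primeFactors.erase p := by
  rw [← Nat.support_factorization, Nat.factorization_ordCompl, Finsupp.support_erase,
    Nat.support_factorization]

lemma succ_mul_omegaSum_succ_le (hP : ∀ {a d : ℕ}, d ∣ a → P a → P d) (hf0 : ∀ n, 0 ≤ f n)
    (hf : ∀ {m n : ℕ}, m.Coprime n → f (m * n) = f m * f n) (N l : ℕ) :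
    (l + 1) * omegaSum P f N (l + 1) ≤ omegaSum P f N 1 * omegaSum P f N l := by
  set S := (omegaLevel P N (l + 1)).sigma fun a => a.primeFactors
  have hcount : (l + 1) * omegaSum P f N (l + 1) = ∑ σ ∈ S, f σ.1 := by
    rw [omegaSum, sum_sigma, mul_sum]
    refine sum_congr rfl fun a ha => ?_
    simp only [sum_const, nsmul_eq_mul, (mem_omegaLevel.mp ha).2.2]
    push_cast; ring
  let i : (Σ _ : ℕ, ℕ) → ℕ × ℕ := fun σ => (ordProj[σ.2] σ.1, ordCompl[σ.2] σ.1)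
  have hmaps (σ) (hσ : σ ∈ S) : i σ ∈ omegaLevel P N 1 ×ˢ omegaLevel P N l := by
    obtain ⟨ha, hp⟩ := mem_sigma.mp hσ
    refine mem_product.mpr ⟨mem_omegaLevel_of_dvd hP ha (Nat.ordProj_dvd _ _) ?_,
      mem_omegaLevel_of_dvd hP ha (Nat.ordCompl_dvd _ _) ?_⟩
    · rw [Nat.primeFactors_ordProj hp, card_singleton]
    · rw [Nat.primeFactors_ordCompl, card_erase_of_mem hp, (mem_omegaLevel.mp ha).2.2,
        Nat.add_sub_cancel]
  have hsplit (σ) (hσ : σ ∈ S) : f σ.1 = f (i σ).1 * f (i σ).2 := by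
    obtain ⟨ha, hp⟩ := mem_sigma.mp hσ
    rw [← hf ((Nat.coprime_ordCompl (Nat.prime_of_mem_primeFactors hp)
      (Nat.mem_primeFactors.mp hp).2.2).pow_left _), Nat.ordProj_mul_ordCompl_eq_self]
  have hinj : Set.InjOn i S := by
    intro σ hσ τ hτ h
    obtain ⟨h1, h2⟩ := Prod.ext_iff.mp h
    have hp : σ.2 = τ.2 := by
      have := congrArg Nat.primeFactors h1
      rwa [Nat.primeFactors_ordProj (mem_sigma.mp hσ).2,
        Nat.primeFactors_ordProj (mem_sigma.mp hτ).2, singleton_inj] at this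
    have ha : σ.1 = τ.1 := by
      rw [← Nat.ordProj_mul_ordCompl_eq_self σ.1 σ.2, ← Nat.ordProj_mul_ordCompl_eq_self τ.1 τ.2]
      exact congrArg₂ (· * ·) h1 h2
    exact Sigma.ext ha (heq_of_eq hp)
  rw [hcount, omegaSum, omegaSum, sum_mul_sum, ← sum_product']
  calc ∑ σ ∈ S, f σ.1 = ∑ y ∈ S.image i, f y.1 * f y.2 := by
        rw [sum_image hinj]; exact sum_congr rfl hsplit
    _ ≤ _ := sum_le_sum_of_subset_of_nonneg (image_subset_iff.mpr hmaps)
        fun y _ _ => mul_nonneg (hf0 _) (hf0 _)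

lemma omegaSum_zero_le_one (hf0 : ∀ n, 0 ≤ f n)
    (hf : ∀ {m n : ℕ}, m.Coprime n → f (m * n) = f m * f n) (N : ℕ) : omegaSum P f N 0 ≤ 1 := by
  have hf1 : f 1 ≤ 1 := by
    have h := hf (Nat.coprime_one_left 1)
    rw [mul_one] at h
    nlinarith [hf0 1]
  have hsub : omegaLevel P N 0 ⊆ {1} := fun a ha => by
    obtain ⟨⟨ha1, -⟩, -, ha0⟩ := mem_omegaLevel.mp ha
    rw [card_eq_zero, Nat.primeFactors_eq_empty] at ha0
    rw [mem_singleton]; omega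
  calc omegaSum P f N 0 ≤ ∑ a ∈ {1}, f a := sum_le_sum_of_subset_of_nonneg hsub fun a _ _ => hf0 a
    _ ≤ 1 := by rwa [sum_singleton]

lemma omegaSum_le_pow_div_factorial (hP : ∀ {a d : ℕ}, d ∣ a → P a → P d)
    (hf0 : ∀ n, 0 ≤ f n) (hf : ∀ {m n : ℕ}, m.Coprime n → f (m * n) = f m * f n) (N l : ℕ) :
    omegaSum P f N l ≤ omegaSum P f N 1 ^ l / l ! := by
  induction l with
  | zero => simpa using omegaSum_zero_le_one hf0 hf N
  | succ l ih =>
    have hS1 : 0 ≤ omegaSum P f N 1 := sum_nonneg fun a _ => hf0 a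
    have h := (succ_mul_omegaSum_succ_le hP hf0 hf N l).trans (mul_le_mul_of_nonneg_left ih hS1)
    rw [Nat.factorial_succ, Nat.cast_mul, Nat.cast_succ, pow_succ', le_div_iff₀ (by positivity)]
    calc omegaSum P f N (l + 1) * ((l + 1) * l !) = (l + 1) * omegaSum P f N (l + 1) * l ! := by
          ring
      _ ≤ omegaSum P f N 1 * (omegaSum P f N 1 ^ l / l !) * l ! := by gcongr
      _ = omegaSum P f N 1 * omegaSum P f N 1 ^ l := by field_simp

lemma omegaSum_one_le (hP : ∀ {a d : ℕ}, d ∣ a → P a → P d) (hf0 : ∀ n, 0 ≤ f n) (N : ℕ) :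
    omegaSum P f N 1 ≤ ∑ p ∈ (Nat.primesLE N).filter P, ∑ k ∈ range N, f (p ^ (k + 1)) := by
  rw [← sum_product']
  refine le_trans ?_ (sum_image_le_of_nonneg (g := fun pk : ℕ × ℕ => pk.1 ^ (pk.2 + 1))
    fun _ _ => hf0 _)
  refine sum_le_sum_of_subset_of_nonneg (fun a ha => ?_) fun a _ _ => hf0 a
  obtain ⟨⟨ha1, haN⟩, hPa, hω⟩ := mem_omegaLevel.mp ha
  obtain ⟨p, k, hp, hk, rfl⟩ :=
    (isPrimePow_nat_iff _).mp (isPrimePow_iff_card_primeFactors_eq_one.mpr hω)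
  have hpk : k < p ^ k := Nat.lt_pow_self hp.one_lt
  refine mem_image.mpr ⟨(p, k - 1), mem_product.mpr ⟨?_, mem_range.mpr (by omega)⟩, by
    simp [Nat.sub_add_cancel hk]⟩
  exact mem_filter.mpr ⟨Nat.mem_primesLE.mpr
    ⟨(Nat.le_of_dvd ha1 (dvd_pow_self p hk.ne')).trans haN, hp⟩, hP (dvd_pow_self p hk.ne') hPa⟩

end OmegaLevel

def DividesSqAddOne (a : ℕ) : Prop := ∃ n : ℕ, 1 ≤ n ∧ a ∣ n ^ 2 + 1

lemma DividesSqAddOne.of_dvd {a d : ℕ} (hd : d ∣ a) (ha : DividesSqAddOne a) :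
    DividesSqAddOne d :=
  let ⟨n, hn, hdvd⟩ := ha
  ⟨n, hn, hd.trans hdvd⟩

lemma Nat.Prime.mod_four_ne_three_of_dividesSqAddOne {p : ℕ} (hp : p.Prime)
    (h : DividesSqAddOne p) : p % 4 ≠ 3 := by
  have := Fact.mk hp
  obtain ⟨n, -, hn⟩ := h
  refine ZMod.mod_four_ne_three_of_sq_eq_neg_one (y := (n : ZMod p)) ?_
  have : ((n ^ 2 + 1 : ℕ) : ZMod p) = 0 := (ZMod.natCast_eq_zero_iff _ _).mpr hn
  push_cast at this
  linear_combination this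

lemma sum_range_inv_totient_prime_pow_le {p : ℕ} (hp : p.Prime) (n : ℕ) :
    ∑ k ∈ range n, (1 : ℝ) / (p ^ (k + 1)).totient ≤ (p : ℝ)⁻¹ + 6 * ((p : ℝ) ^ 2)⁻¹ := by
  have hp2 : (2 : ℝ) ≤ p := by exact_mod_cast hp.two_le
  have hterm (k : ℕ) : (1 : ℝ) / (p ^ (k + 1)).totient = ((p : ℝ) - 1)⁻¹ * (p : ℝ)⁻¹ ^ k := by
    rw [Nat.totient_prime_pow_succ hp, Nat.cast_mul, Nat.cast_pow, Nat.cast_pred hp.pos, inv_pow,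
      one_div, mul_inv, mul_comm]
  have hgeom : ∑ k ∈ range n, (p : ℝ)⁻¹ ^ k ≤ (1 - (p : ℝ)⁻¹)⁻¹ := by
    have := geom_sum_Ico_le_of_lt_one (m := 0) (n := n) (by positivity : (0 : ℝ) ≤ (p : ℝ)⁻¹)
      (inv_lt_one_of_one_lt₀ (by linarith))
    rwa [← range_eq_Ico, pow_zero, one_div] at this
  simp only [hterm, ← mul_sum]
  calc ((p : ℝ) - 1)⁻¹ * ∑ k ∈ range n, (p : ℝ)⁻¹ ^ k ≤ ((p : ℝ) - 1)⁻¹ * (1 - (p : ℝ)⁻¹)⁻¹ :=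
        mul_le_mul_of_nonneg_left hgeom (inv_nonneg.mpr (by linarith))
    _ ≤ (p : ℝ)⁻¹ + 6 * ((p : ℝ) ^ 2)⁻¹ := by
        have h1 : (1 - (p : ℝ)⁻¹)⁻¹ = p / (p - 1) := by
          field_simp
        rw [h1, ← div_eq_inv_mul, div_div, div_le_iff₀ (by nlinarith)]
        field_simp
        nlinarith

lemma omegaSum_one_inv_totient_le (N : ℕ) :
    omegaSum DividesSqAddOne (fun a => (1 : ℝ) / a.totient) N 1
      ≤ 1 / 2 + ∑ p ∈ (Nat.primesLE N).filter (· % 4 = 1), (p : ℝ)⁻¹ + 6 * primeZetaTwo := by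
  set F := (Nat.primesLE N).filter (· % 4 = 1)
  have hsub : (Nat.primesLE N).filter DividesSqAddOne ⊆ insert 2 F := by
    intro p hp
    obtain ⟨hpN, hPp⟩ := mem_filter.mp hp
    have hp := (Nat.mem_primesLE.mp hpN).2
    have h3 := hp.mod_four_ne_three_of_dividesSqAddOne hPp
    rcases hp.eq_two_or_odd with rfl | hodd
    · exact mem_insert_self 2 F
    · exact mem_insert_of_mem (mem_filter.mpr ⟨hpN, by omega⟩)
  have hprime (p) (hp : p ∈ insert 2 F) : p.Prime := by
    rcases mem_insert.mp hp with rfl | hp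
    exacts [Nat.prime_two, (Nat.mem_primesLE.mp (mem_filter.mp hp).1).2]
  have h2F : 2 ∉ F := fun h => by simpa using (mem_filter.mp h).2
  calc omegaSum DividesSqAddOne (fun a => (1 : ℝ) / a.totient) N 1
      ≤ ∑ p ∈ (Nat.primesLE N).filter DividesSqAddOne,
          ∑ k ∈ range N, (1 : ℝ) / (p ^ (k + 1)).totient :=
        omegaSum_one_le (P := DividesSqAddOne) (f := fun a => (1 : ℝ) / a.totient)
          DividesSqAddOne.of_dvd (fun _ => by positivity) N
    _ ≤ ∑ p ∈ insert 2 F, ((p : ℝ)⁻¹ + 6 * ((p : ℝ) ^ 2)⁻¹) := by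
        refine (sum_le_sum fun p hp => sum_range_inv_totient_prime_pow_le
          (Nat.mem_primesLE.mp (mem_filter.mp hp).1).2 N).trans ?_
        exact sum_le_sum_of_subset_of_nonneg hsub fun _ _ _ => by positivity
    _ = (2⁻¹ + ∑ p ∈ F, (p : ℝ)⁻¹) + 6 * ∑ p ∈ insert 2 F, ((p : ℝ) ^ 2)⁻¹ := by
        rw [sum_add_distrib, ← mul_sum, sum_insert h2F, Nat.cast_ofNat]
    _ ≤ 1 / 2 + ∑ p ∈ F, (p : ℝ)⁻¹ + 6 * primeZetaTwo := by
        have := sum_le_tsum_primes hprime (f := fun p => ((p : ℝ) ^ 2)⁻¹) (fun p _ => by positivity)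
          summable_primes_inv_sq
        rw [primeZetaTwo]
        linarith

/-- There exists an absolute constant `B > 0` such that for every `l ≥ 0` and all
`x ≥ 16`, `∑_{a ≤ x, a ∈ 𝓜, ω(a) = l} 1/φ(a) ≤ (0.5·log log x + B)^l / l!`,
where `𝓜` is the set of positive integers dividing `n²+1` for some `n ≥ 1`. -/
theorem sum_inv_totient_M_omega_eq :
    ∃ B : ℝ, 0 < B ∧ ∀ l : ℕ, ∀ x : ℝ, x ≥ 16 →
      (∑ a ∈ (Finset.Icc 1 ⌊x⌋₊).filter
          (fun a => (∃ n : ℕ, 1 ≤ n ∧ a ∣ n ^ 2 + 1) ∧ a.primeFactors.card = l),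
        (1 : ℝ) / a.totient) ≤
      (0.5 * Real.log (Real.log x) + B) ^ l / (Nat.factorial l) := by
  refine ⟨3 / 2 + log 2 / 2 + log 4 + 8 * primeZetaTwo,
    add_pos_of_pos_of_nonneg (by positivity) (by linarith [primeZetaTwo_nonneg]), fun l x hx => ?_⟩
  have hx' : rexp 1 ≤ x := by linarith [Real.exp_one_lt_d9]
  have hS1 : omegaSum DividesSqAddOne (fun a => (1 : ℝ) / a.totient) ⌊x⌋₊ 1
      ≤ 0.5 * log (log x) + (3 / 2 + log 2 / 2 + log 4 + 8 * primeZetaTwo) := by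
    linarith [omegaSum_one_inv_totient_le ⌊x⌋₊, sum_primes_one_mod_four_inv_le hx']
  calc _ = omegaSum DividesSqAddOne (fun a => (1 : ℝ) / a.totient) ⌊x⌋₊ l := rfl
    _ ≤ omegaSum DividesSqAddOne (fun a => (1 : ℝ) / a.totient) ⌊x⌋₊ 1 ^ l / l ! :=
        omegaSum_le_pow_div_factorial DividesSqAddOne.of_dvd (fun _ => by positivity)
          (fun h => by rw [Nat.totient_mul h, Nat.cast_mul, one_div_mul_one_div]) ⌊x⌋₊ l
    _ ≤ _ := by
        gcongr
        exact sum_nonneg fun _ _ => by positivity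
end
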